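/- arXiv:1005.1744 — 2 statements merged into one kernel-verified Lean document; each statement's English description precedes it below -/
import Mathlib

section
/- Let P be an n×l binary matrix with code C(P) of rank r. For every real θ with e^{2iθ} ≠ 1: e^{iθ(r−n)} · i^r · (sin θ)^r · T_{M(P)}( (e^{iθ}+e^{−iθ})/(e^{iθ}−e^{−iθ}), e^{2iθ} ) = 2^{−r} · Σ_{c∈C(P)} exp( iθ·(n − 2|c|) ), i.e. the normalised weight-enumerator value α_{(P,θ)} equals the average over all codewords c of C(P) of exp(iθ(n−2|c|)). -/
open Matrix BigOperators Finset

noncomputable section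

/-- The binary code generated by the columns of `P`: all vectors `P·s`. -/
def code {m : Type*} [Fintype m] {l : ℕ} (P : Matrix m (Fin l) (ZMod 2)) :
    Finset (m → ZMod 2) :=
  Finset.image P.mulVec Finset.univ

/-- Rank function of the binary matroid of `P`: the F₂-rank of the submatrix of
rows indexed by `X`. -/
def rho {m : Type*} [Fintype m] {l : ℕ} (P : Matrix m (Fin l) (ZMod 2)) (X : Finset m) : ℕ :=
  (P.submatrix (fun i : {i // i ∈ X} => (i : m)) id).rank

/-- Tutte polynomial of the binary matroid of `P`. -/
def tutte {m : Type*} [Fintype m] {l : ℕ} (P : Matrix m (Fin l) (ZMod 2)) (x y : ℂ) : ℂ :=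
  ∑ X ∈ (Finset.univ : Finset m).powerset,
    (x - 1) ^ (rho P Finset.univ - rho P X) * (y - 1) ^ (X.card - rho P X)

/-- Normalised weight enumerator. -/
def alpha {m : Type*} [Fintype m] {l : ℕ} (P : Matrix m (Fin l) (ZMod 2)) (θ : ℝ) : ℂ :=
  (2 : ℂ) ^ (-(P.rank : ℤ)) *
    ∑ c ∈ code P, Complex.exp (Complex.I * θ * ((Fintype.card m : ℂ) - 2 * (hammingNorm c : ℂ)))

/-- The IQP probability distribution of an X-program `(P, θ)`. -/
def iqpProb {n l : ℕ} (P : Matrix (Fin n) (Fin l) (ZMod 2)) (θ : ℝ) (x : Fin l → ZMod 2) : ℝ :=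
  ‖((2 : ℂ) ^ (-(l : ℤ)) *
    ∑ a : Fin l → ZMod 2, (-1 : ℂ) ^ (x ⬝ᵥ a).val *
      Complex.exp (Complex.I * θ * ∑ j, (-1 : ℂ) ^ ((P j) ⬝ᵥ a).val))‖ ^ 2

/-- Affinification: the submatrix of rows `P_j` with `P_j ⬝ s = 1`. -/
def affin {n l : ℕ} (P : Matrix (Fin n) (Fin l) (ZMod 2)) (s : Fin l → ZMod 2) :
    Matrix {j : Fin n // (P j) ⬝ᵥ s = 1} (Fin l) (ZMod 2) :=
  Matrix.of fun j k => P j.1 k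

/-!
With `u = e^{iθ}` the identity is Greene's theorem
`∑_{c ∈ C} x^{n-|c|} y^{|c|} = y^{n-r} (x-y)^r T((x+y)/(x-y), x/y)` at `x = u`, `y = u⁻¹`,
since `i sin θ = (u - u⁻¹)/2` and `e^{2iθ} = u/u⁻¹`.
For Greene's theorem, expand `x^{n-|c|} = ((x-y) + y)^{|Z(c)|}` over the subsets `A` of the zero
set `Z(c)` of `c` and swap the sums. The codewords vanishing on `A` form the kernel of the
restriction `C → F₂^A`, whose image has dimension `ρ(A)`; so `A` is counted `2^{r-ρ(A)}` times,
and `2^{r-ρ(A)} (x-y)^{|A|} y^{n-|A|}` is exactly the `A`-summand of the Tutte side.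
-/

section LinearAlgebra

variable {K V W : Type*} [Field K] [AddCommGroup V] [Module K V] [AddCommGroup W] [Module K W]

theorem Submodule.finrank_map_add_finrank_inf_ker (R : Submodule K V) [FiniteDimensional K R]
    (π : V →ₗ[K] W) :
    Module.finrank K (R.map π) + Module.finrank K ↥(R ⊓ LinearMap.ker π) = Module.finrank K R := by
  rw [← LinearMap.range_domRestrict, ← Submodule.map_comap_subtype,
    Submodule.finrank_map_subtype_eq, ← LinearMap.ker_domRestrict]
  exact LinearMap.finrank_range_add_finrank_ker _

end LinearAlgebra

theorem Matrix.mulVecLin_submatrix_id {R k m n : Type*} [CommSemiring R] [Fintype n]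
    (f : k → m) (M : Matrix m n R) :
    (M.submatrix f id).mulVecLin = LinearMap.funLeft R R f ∘ₗ M.mulVecLin :=
  LinearMap.ext fun _ => rfl

section BinaryMatroid

variable {m : Type*} [Fintype m] {l : ℕ} (P : Matrix m (Fin l) (ZMod 2))

theorem rho_le_rank (A : Finset m) : rho P A ≤ P.rank :=
  P.rank_submatrix_le _ _

theorem rho_le_card (A : Finset m) : rho P A ≤ A.card := by
  simpa [rho] using (P.submatrix (fun i : A => (i : m)) id).rank_le_card_height

theorem rho_univ : rho P univ = P.rank :=
  P.rank_submatrix (Equiv.subtypeUnivEquiv mem_univ) (Equiv.refl _)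

theorem card_code_filter_forall_eq_zero (A : Finset m) :
    #{c ∈ code P | ∀ j ∈ A, c j = 0} = 2 ^ (P.rank - rho P A) := by
  set π := LinearMap.funLeft (ZMod 2) (ZMod 2) (fun i : A => (i : m))
  set S := LinearMap.range P.mulVecLin ⊓ LinearMap.ker π
  have hS : (↑{c ∈ code P | ∀ j ∈ A, c j = 0} : Set (m → ZMod 2)) = S := by
    ext c
    simp [S, π, code, funext_iff, LinearMap.funLeft]
  have hdim : Module.finrank (ZMod 2) S = P.rank - rho P A := by
    have := (LinearMap.range P.mulVecLin).finrank_map_add_finrank_inf_ker π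
    rw [← LinearMap.range_comp, ← Matrix.mulVecLin_submatrix_id] at this
    exact Nat.eq_sub_of_add_eq' this
  rw [← Set.ncard_coe_finset, hS, ← Nat.card_coe_set_eq, SetLike.coe_sort_coe,
    Module.natCard_eq_pow_finrank (K := ZMod 2), Nat.card_zmod, hdim]

end BinaryMatroid

section WeightEnumerator

variable {m : Type*} [Fintype m]

theorem sum_powerset_pow_mul_pow_card_sub {R : Type*} [CommSemiring R] (a b : R) (s : Finset m) :
    ∑ t ∈ s.powerset, a ^ #t * b ^ (Fintype.card m - #t) =
      (a + b) ^ #s * b ^ (Fintype.card m - #s) := by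
  rw [← sum_pow_mul_eq_add_pow, sum_mul]
  refine sum_congr rfl fun t ht => ?_
  have hts := card_le_card (mem_powerset.1 ht)
  have hs := card_le_univ s
  rw [mul_assoc, ← pow_add]
  congr 2
  omega

theorem card_filter_eq_zero {β : Type*} [Zero β] [DecidableEq β] (c : m → β) :
    #{j | c j = 0} = Fintype.card m - hammingNorm c := by
  rw [hammingNorm, ← card_univ, ← card_filter_add_card_filter_not (s := univ) (fun j => c j = 0),
    Nat.add_sub_cancel]

theorem pow_sub_hammingNorm_mul_pow_hammingNorm {R β : Type*} [CommRing R] [Zero β]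
    [DecidableEq β] (x y : R) (c : m → β) :
    x ^ (Fintype.card m - hammingNorm c) * y ^ hammingNorm c =
      ∑ A ∈ ({j | c j = 0} : Finset m).powerset, (x - y) ^ #A * y ^ (Fintype.card m - #A) := by
  have hc : hammingNorm c ≤ Fintype.card m := hammingNorm_le_card_fintype
  rw [sum_powerset_pow_mul_pow_card_sub, sub_add_cancel, card_filter_eq_zero,
    Nat.sub_sub_self hc]

theorem sum_sum_powerset_filter_eq_zero {β M : Type*} [Zero β] [DecidableEq β]
    [AddCommMonoid M] (S : Finset (m → β)) (f : Finset m → M) :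
    ∑ c ∈ S, ∑ A ∈ ({j | c j = 0} : Finset m).powerset, f A =
      ∑ A ∈ (univ : Finset m).powerset, #{c ∈ S | ∀ j ∈ A, c j = 0} • f A := by
  rw [sum_comm' (t' := univ.powerset) (s' := fun A => {c ∈ S | ∀ j ∈ A, c j = 0})]
  · simp only [sum_const]
  · intro c A
    simp [subset_iff, and_comm]

end WeightEnumerator

theorem greene_summand_eq {K : Type*} [Field K] {x y : K} (hy : y ≠ 0) (hxy : x ≠ y)
    {n r ρ k : ℕ} (hρr : ρ ≤ r) (hrn : r ≤ n) (hρk : ρ ≤ k) (hkn : k ≤ n) :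
    y ^ (n - r) * (x - y) ^ r * (((x + y) / (x - y) - 1) ^ (r - ρ) * (x / y - 1) ^ (k - ρ)) =
      2 ^ (r - ρ) * ((x - y) ^ k * y ^ (n - k)) := by
  have hd : x - y ≠ 0 := sub_ne_zero.2 hxy
  rw [show (x + y) / (x - y) - 1 = 2 * y / (x - y) by field_simp; ring,
    show x / y - 1 = (x - y) / y by field_simp]
  simp only [div_pow, mul_pow, pow_sub₀ _ hy hrn, pow_sub₀ _ hy hkn, pow_sub₀ _ hy hρr,
    pow_sub₀ _ hy hρk, pow_sub₀ _ hd hρr, pow_sub₀ _ hd hρk]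
  field_simp

theorem sum_code_pow_mul_pow_eq_tutte {m : Type*} [Fintype m] {l : ℕ}
    (P : Matrix m (Fin l) (ZMod 2)) {x y : ℂ} (hy : y ≠ 0) (hxy : x ≠ y) :
    ∑ c ∈ code P, x ^ (Fintype.card m - hammingNorm c) * y ^ hammingNorm c =
      y ^ (Fintype.card m - P.rank) * (x - y) ^ P.rank * tutte P ((x + y) / (x - y)) (x / y) := by
  simp_rw [pow_sub_hammingNorm_mul_pow_hammingNorm x y]
  rw [sum_sum_powerset_filter_eq_zero, tutte, rho_univ, mul_sum]
  refine sum_congr rfl fun A _ => ?_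
  rw [card_code_filter_forall_eq_zero, nsmul_eq_mul, Nat.cast_pow, Nat.cast_ofNat,
    greene_summand_eq hy hxy (rho_le_rank P A) P.rank_le_card_height (rho_le_card P A)
      (card_le_univ A)]

theorem Complex.exp_mul_natCast_sub_natCast (z : ℂ) (a b : ℕ) :
    Complex.exp (z * (a - b)) = Complex.exp z ^ a * (Complex.exp z)⁻¹ ^ b := by
  rw [mul_sub, Complex.exp_sub, mul_comm z, mul_comm z, Complex.exp_nat_mul, Complex.exp_nat_mul,
    div_eq_mul_inv, inv_pow]

theorem Complex.I_mul_sin (z : ℂ) :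
    Complex.I * Complex.sin z =
      (Complex.exp (Complex.I * z) - Complex.exp (-(Complex.I * z))) / 2 := by
  rw [mul_comm, ← Complex.sinh_mul_I, Complex.sinh, mul_comm]

/-- for `e^{2iθ} ≠ 1`,
`e^{iθ(r−n)} · i^r · (sin θ)^r · T_{M(P)}((e^{iθ}+e^{−iθ})/(e^{iθ}−e^{−iθ}), e^{2iθ})
  = 2^{−r} · Σ_{c∈C(P)} exp(iθ(n−2|c|)) = α_{(P,θ)}`. -/
theorem alpha_eq_tutte {n l : ℕ} (P : Matrix (Fin n) (Fin l) (ZMod 2)) (θ : ℝ)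
    (hθ : Complex.exp (2 * Complex.I * θ) ≠ 1) :
    Complex.exp (Complex.I * θ * ((P.rank : ℂ) - (n : ℂ))) * Complex.I ^ P.rank *
        ((Real.sin θ : ℂ)) ^ P.rank *
        tutte P
          ((Complex.exp (Complex.I * θ) + Complex.exp (-(Complex.I * θ))) /
            (Complex.exp (Complex.I * θ) - Complex.exp (-(Complex.I * θ))))
          (Complex.exp (2 * Complex.I * θ)) =
      (2 : ℂ) ^ (-(P.rank : ℤ)) *
        ∑ c ∈ code P, Complex.exp (Complex.I * θ * ((n : ℂ) - 2 * (hammingNorm c : ℂ))) := by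
  set u := Complex.exp (Complex.I * θ) with hu_def
  have hu : u ≠ 0 := Complex.exp_ne_zero _
  have hsq : Complex.exp (2 * Complex.I * θ) = u / u⁻¹ := by
    rw [div_inv_eq_mul, ← Complex.exp_add]
    ring_nf
  have hu' : u ≠ u⁻¹ := fun h => hθ (by rw [hsq, ← h, div_self hu])
  have hrn : P.rank ≤ n := by simpa using P.rank_le_card_height
  have hsin : Complex.I ^ P.rank * (Real.sin θ : ℂ) ^ P.rank = (u - u⁻¹) ^ P.rank / 2 ^ P.rank := by
    rw [← mul_pow, Complex.ofReal_sin, Complex.I_mul_sin, Complex.exp_neg, div_pow]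
  have hexp : Complex.exp (Complex.I * θ * ((P.rank : ℂ) - (n : ℂ))) = u⁻¹ ^ (n - P.rank) := by
    rw [Complex.exp_mul_natCast_sub_natCast, pow_sub₀ _ (inv_ne_zero hu) hrn, inv_pow, inv_pow,
      inv_inv, mul_comm]
  have hword (c : Fin n → ZMod 2) :
      Complex.exp (Complex.I * θ * ((n : ℂ) - 2 * (hammingNorm c : ℂ))) =
        u ^ (n - hammingNorm c) * u⁻¹ ^ hammingNorm c := by
    have hc : hammingNorm c ≤ n := by simpa using hammingNorm_le_card_fintype (x := c)
    rw [← Complex.exp_mul_natCast_sub_natCast, Nat.cast_sub hc]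
    ring_nf
  have hgreene := sum_code_pow_mul_pow_eq_tutte P (inv_ne_zero hu) hu'
  simp only [Fintype.card_fin] at hgreene
  rw [Complex.exp_neg, ← hu_def, hsq, hexp, mul_assoc _ (Complex.I ^ _), hsin,
    sum_congr rfl fun c _ => hword c, hgreene, _root_.zpow_neg, zpow_natCast]
  ring

end
end

section
/- Let P be an n×l binary matrix with code C(P) of rank r, let x ∈ F₂ˡ be a nonzero vector lying in the row space of P, fix an index j with x_j = 1, and let Q := P⊤x be the projection of P along x; assume that C(Q) ≠ C(P) (equivalently, the rank of C(Q) is r−1). For an integer t ≥ 1, let Q(t) denote the (n+t)×l binary matrix obtained from P by appending t rows each equal to x. Then for all complex numbers x̂, ŷ: (1−ŷ) · T_{M(Q(t))}(x̂,ŷ) = (1−ŷᵗ) · T_{M(Q)}(x̂,ŷ) + (1−ŷ) · T_{M(P)}(x̂,ŷ). -/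
/-!
A set of rows of `Q(t)` is `A ⊔ B` with `A` rows of `P` and `B` copies of `x`; its rank is
`rho_P A` if `B = ∅` and `rank (P_A ∪ {x})` otherwise. The projection kills the `j`-th
coordinate while `x j = 1`, so `x` stays outside the span of the projected rows, while
`span (Q_A ∪ {x}) = span (P_A ∪ {x})`; hence `rank (P_A ∪ {x}) = rho_Q A + 1`, and, as `x` lies
in the row space, `rho_P E = rho_Q E + 1`. The Tutte sum of `Q(t)` therefore splits: `B = ∅`
gives `T_P`, and a nonempty `B` weights the `A`-term of `T_Q` by `(y - 1)^(|B| - 1)`, where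
`∑_{B ≠ ∅} (y - 1)^(|B| - 1) = (y^t - 1) / (y - 1)`.
-/

open Matrix BigOperators Finset

noncomputable section

open Module Submodule

-- `tutte P` is definitionally `tutteOfRank (rho P)`.
def tutteOfRank {m R : Type*} [Fintype m] [CommRing R] (r : Finset m → ℕ) (x y : R) : R :=
  ∑ X ∈ (univ : Finset m).powerset, (x - 1) ^ (r univ - r X) * (y - 1) ^ (#X - r X)

section TutteOfRank

variable {m β R : Type*} [Fintype m] [Fintype β] [CommRing R]

theorem sum_finset_sum_eq_sum_disjSum {f : Finset (m ⊕ β) → R} :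
    ∑ X, f X = ∑ A : Finset m, ∑ B : Finset β, f (A.disjSum B) := by
  rw [← Fintype.sum_prod_type']
  exact Fintype.sum_equiv sumEquiv.toEquiv _ _ fun X => by simp [toLeft_disjSum_toRight]

theorem sum_erase_empty_sub_one_pow_card [DecidableEq β] (z : R) :
    ∑ B ∈ (univ : Finset (Finset β)).erase ∅, (z - 1) ^ #B = z ^ Fintype.card β - 1 := by
  rw [← sub_add_cancel z 1, ← Fintype.sum_pow_mul_eq_add_pow β (z - 1) 1,
    ← add_sum_erase _ _ (mem_univ ∅)]
  simp

/-- `rP`, `rQ`, `rR` are the rank functions of a matroid `M`, of its contraction `M / e` by a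
non-loop `e` in its closure, and of `M` with `card β` elements parallel to `e` adjoined. -/
theorem one_sub_mul_tutteOfRank_of_parallel (rP rQ : Finset m → ℕ) (rR : Finset (m ⊕ β) → ℕ)
    (hR_empty : ∀ A, rR (A.disjSum ∅) = rP A)
    (hR_nonempty : ∀ A B, B.Nonempty → rR (A.disjSum B) = rQ A + 1)
    (hP_univ : rP univ = rQ univ + 1) (hQ_card : ∀ A, rQ A ≤ #A) (x y : R) :
    (1 - y) * tutteOfRank rR x y =
      (1 - y ^ Fintype.card β) * tutteOfRank rQ x y + (1 - y) * tutteOfRank rP x y := by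
  classical
  set termP := fun A => (x - 1) ^ (rP univ - rP A) * (y - 1) ^ (#A - rP A)
  set termQ := fun A => (x - 1) ^ (rQ univ - rQ A) * (y - 1) ^ (#A - rQ A)
  have hR_univ : rR univ = rP univ := by
    rw [← univ_disjSum_univ]
    rcases (univ : Finset β).eq_empty_or_nonempty with h | h
    · rw [h, hR_empty]
    · rw [hR_nonempty _ _ h, hP_univ]
  have hterm : ∀ A B, B.Nonempty →
      (1 - y) * ((x - 1) ^ (rP univ - rR (A.disjSum B)) *
        (y - 1) ^ (#(A.disjSum B) - rR (A.disjSum B))) = -((y - 1) ^ #B * termQ A) := by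
    intro A B hB
    have hA := hQ_card A
    obtain ⟨k, hk⟩ : ∃ k, #B = k + 1 := ⟨#B - 1, by have := hB.card_pos; omega⟩
    rw [hR_nonempty A B hB, card_disjSum, hk, hP_univ, Nat.add_sub_add_right,
      show #A + (k + 1) - (rQ A + 1) = (#A - rQ A) + k by omega]
    simp only [termQ]
    ring
  have hinner : ∀ A : Finset m,
      (1 - y) * ∑ B : Finset β, (x - 1) ^ (rP univ - rR (A.disjSum B)) *
        (y - 1) ^ (#(A.disjSum B) - rR (A.disjSum B)) =
      (1 - y) * termP A - (y ^ Fintype.card β - 1) * termQ A := by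
    intro A
    rw [← add_sum_erase _ _ (mem_univ ∅), mul_add, mul_sum, hR_empty, card_disjSum, card_empty,
      add_zero, sum_congr rfl fun B hB => hterm A B (nonempty_iff_ne_empty.2 (ne_of_mem_erase hB)),
      sum_neg_distrib, ← sum_mul, sum_erase_empty_sub_one_pow_card]
    ring
  simp only [tutteOfRank, powerset_univ]
  rw [hR_univ, sum_finset_sum_eq_sum_disjSum, mul_sum, sum_congr rfl fun A _ => hinner A, sum_sub_distrib,
    ← mul_sum, ← mul_sum]
  ring

end TutteOfRank

section ProjectionAlongVector

variable {K V : Type*} [Field K] [AddCommGroup V] [Module K V]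

theorem finrank_span_insert_of_notMem [Module.Finite K V] {x : V} {s : Set V}
    (hx : x ∉ span K s) : finrank K (span K (insert x s)) = finrank K (span K s) + 1 := by
  rw [span_insert, sup_comm]
  exact finrank_sup_span_singleton hx

theorem span_insert_image_sub_smul (φ : V →ₗ[K] K) (x : V) (s : Set V) :
    span K (insert x ((fun v => v - φ v • x) '' s)) = span K (insert x s) := by
  have hx : ∀ {t : Set V}, x ∈ span K (insert x t) := subset_span (Set.mem_insert x _)
  apply le_antisymm <;> rw [span_le, Set.insert_subset_iff] <;> refine ⟨hx, ?_⟩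
  · rintro _ ⟨v, hv, rfl⟩
    exact sub_mem (subset_span (Set.mem_insert_of_mem x hv)) (smul_mem _ _ hx)
  · intro v hv
    rw [SetLike.mem_coe, ← sub_add_cancel v (φ v • x)]
    exact add_mem (subset_span (Set.mem_insert_of_mem x ⟨v, hv, rfl⟩)) (smul_mem _ _ hx)

theorem notMem_span_image_sub_smul {φ : V →ₗ[K] K} {x : V} (hx : φ x = 1) (s : Set V) :
    x ∉ span K ((fun v => v - φ v • x) '' s) := by
  have hker : span K ((fun v => v - φ v • x) '' s) ≤ LinearMap.ker φ := by
    rw [span_le]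
    rintro _ ⟨v, -, rfl⟩
    simp [hx]
  intro hmem
  simpa [hx] using hker hmem

theorem finrank_span_image_sub_smul_add_one [Module.Finite K V] {φ : V →ₗ[K] K} {x : V}
    (hx : φ x = 1) (s : Set V) :
    finrank K (span K ((fun v => v - φ v • x) '' s)) + 1 = finrank K (span K (insert x s)) := by
  rw [← finrank_span_insert_of_notMem (notMem_span_image_sub_smul hx s),
    span_insert_image_sub_smul]

end ProjectionAlongVector

section BinaryMatroid

variable {m m' : Type*} [Fintype m] [Fintype m'] {l : ℕ}

theorem rho_eq_finrank_span (P : Matrix m (Fin l) (ZMod 2)) (X : Finset m) :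
    rho P X = finrank (ZMod 2) (span (ZMod 2) (P.row '' X)) := by
  have hrows : Set.range (P.submatrix (fun i : {i // i ∈ X} => (i : m)) id).row = P.row '' X :=
    (Set.range_comp P.row _).trans (by rw [Subtype.range_coe_subtype]; rfl)
  rw [rho, rank_eq_finrank_span_row, hrows]

theorem rho_le_card_s19 (P : Matrix m (Fin l) (ZMod 2)) (X : Finset m) : rho P X ≤ #X := by
  simpa [rho] using rank_le_card_height (P.submatrix (fun i : {i // i ∈ X} => (i : m)) id)

theorem rho_fromRows_disjSum (P₁ : Matrix m (Fin l) (ZMod 2)) (P₂ : Matrix m' (Fin l) (ZMod 2))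
    (A : Finset m) (B : Finset m') :
    rho (fromRows P₁ P₂) (A.disjSum B) =
      finrank (ZMod 2) (span (ZMod 2) (P₁.row '' A ∪ P₂.row '' B)) := by
  have hrows : (fromRows P₁ P₂).row '' (A.disjSum B) = P₁.row '' A ∪ P₂.row '' B := by
    rw [← map_inl_disjUnion_map_inr, coe_disjUnion, coe_map, coe_map, Set.image_union,
      Set.image_image, Set.image_image]
    rfl
  rw [rho_eq_finrank_span, hrows]

theorem rho_projection_add_one (P : Matrix m (Fin l) (ZMod 2)) {x : Fin l → ZMod 2} {j : Fin l}
    (hj : x j = 1) (A : Finset m) :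
    rho (of fun a b => P a b + P a j * x b) A + 1 =
      finrank (ZMod 2) (span (ZMod 2) (insert x (P.row '' A))) := by
  let φ : (Fin l → ZMod 2) →ₗ[ZMod 2] ZMod 2 := LinearMap.proj j
  have hrows : (of fun a b => P a b + P a j * x b).row '' A =
      (fun v => v - φ v • x) '' (P.row '' A) := by
    rw [Set.image_image]
    refine Set.image_congr fun a _ => ?_
    ext b
    simp [φ, Matrix.row, CharTwo.sub_eq_add]
  rw [rho_eq_finrank_span, hrows]
  exact finrank_span_image_sub_smul_add_one (φ := φ) hj _

end BinaryMatroid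

theorem tutte_append_rows_general {n l : ℕ} (P : Matrix (Fin n) (Fin l) (ZMod 2))
    (x : Fin l → ZMod 2)
    (hrow : ∃ w : Fin n → ZMod 2, Matrix.vecMul w P = x)
    (j : Fin l) (hj : x j = 1)
    (t : ℕ) (xh yh : ℂ) :
    (1 - yh) *
        tutte (Matrix.of (Sum.elim (fun a : Fin n => P a) (fun _ : Fin t => x))) xh yh =
      (1 - yh ^ t) * tutte (Matrix.of fun a b => P a b + P a j * x b) xh yh +
        (1 - yh) * tutte P xh yh := by
  have hx_mem : x ∈ span (ZMod 2) (Set.range P.row) := by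
    obtain ⟨w, rfl⟩ := hrow
    rw [← range_vecMulLinear]
    exact ⟨w, rfl⟩
  have hQ := rho_projection_add_one P hj
  have htutte := one_sub_mul_tutteOfRank_of_parallel (R := ℂ) (rho P)
    (rho (of fun a b => P a b + P a j * x b)) (rho (fromRows P (of fun _ : Fin t => x)))
    (fun A => by rw [rho_fromRows_disjSum, coe_empty, Set.image_empty, Set.union_empty,
      rho_eq_finrank_span])
    (fun A B hB => by
      have hcopies : (of fun _ : Fin t => x).row '' B = {x} := (coe_nonempty.2 hB).image_const x
      rw [rho_fromRows_disjSum, hcopies, Set.union_singleton, hQ])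
    (by rw [hQ, rho_eq_finrank_span, coe_univ, Set.image_univ, span_insert_eq_span hx_mem])
    (fun A => rho_le_card_s19 _ A) xh yh
  rwa [Fintype.card_fin] at htutte

/-- let `x ≠ 0` lie in the row space of `P` with `x j = 1`, let
`Q = P⊤x` be the projection (row `a` of `Q` is `P_a + P_{a,j}·x`), and assume
`C(Q) ≠ C(P)`.  For `t ≥ 1` let `Q(t)` be `P` with `t` extra rows equal to `x`.
Then `(1−yh)·T_{M(Q(t))}(xh,yh) = (1−yhᵗ)·T_{M(Q)}(xh,yh) + (1−yh)·T_{M(P)}(xh,yh)`. -/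
theorem tutte_append_rows {n l : ℕ} (P : Matrix (Fin n) (Fin l) (ZMod 2))
    (x : Fin l → ZMod 2) (hx : x ≠ 0)
    (hrow : ∃ w : Fin n → ZMod 2, Matrix.vecMul w P = x)
    (j : Fin l) (hj : x j = 1)
    (hQ : code (Matrix.of fun a b => P a b + P a j * x b) ≠ code P)
    (t : ℕ) (ht : 1 ≤ t) (xh yh : ℂ) :
    (1 - yh) *
        tutte (Matrix.of (Sum.elim (fun a : Fin n => P a) (fun _ : Fin t => x))) xh yh =
      (1 - yh ^ t) * tutte (Matrix.of fun a b => P a b + P a j * x b) xh yh +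
        (1 - yh) * tutte P xh yh :=
  tutte_append_rows_general P x hrow j hj t xh yh
end
end
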